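/- A graph G is (bull, claw, P_5)-free if and only if every connected component of G is 3P_1-free (i.e., has independence number at most 2). -/

import Mathlib

variable {V : Type*}

/-- The bull: a triangle `0,1,2` with pendant vertices `3` (attached to `0`) and
`4` (attached to `1`). -/
def bull : SimpleGraph (Fin 5) :=
  SimpleGraph.fromEdgeSet {s(0,1), s(1,2), s(0,2), s(0,3), s(1,4)}

/-- The claw `K_{1,3}`. -/
def claw : SimpleGraph (Fin 4) := SimpleGraph.fromEdgeSet {s(0,1), s(0,2), s(0,3)}

/-- `3P_1`: the edgeless graph on three vertices. -/
def threeP1 : SimpleGraph (Fin 3) := ⊥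

/-! An induced path `x - a - z` in a (bull, claw, P₅)-free graph dominates its connected
component: if `v` is at distance two from `{x, a, z}` and `u` is a neighbour of `v` adjacent to
the path, then `v, u, x, a, z` contain an induced claw, bull or P₅. Now let `x, y, z` be
independent in one component. The first vertex `q` on a path from `x` to `z` that is neither `x`
nor a neighbour of `x`, with its predecessor `p`, gives an induced path `x - p - q`; as it
dominates `y` and `z`, two of `x, y, z` have a common neighbour `a`. The induced path through `a`
joining them dominates the third vertex, which is then adjacent to `a`, a claw. Conversely the
bull, the claw and P₅ are connected and contain three independent vertices.

Independence of `v` and `w` is written `Gᶜ.Adj v w`; "`v` is anticomplete to `x, a, z`" means it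
is `Gᶜ`-adjacent to all three, i.e. not dominated by them. -/

open SimpleGraph

section

variable {W : Type*} {G : SimpleGraph V}

def SimpleGraph.Embedding.ofAdj {H : SimpleGraph W} (f : W → V)
    (hadj : ∀ ⦃i j⦄, H.Adj i j → G.Adj (f i) (f j))
    (hnadj : ∀ ⦃i j⦄, Hᶜ.Adj i j → Gᶜ.Adj (f i) (f j)) : H ↪g G where
  toFun := f
  inj' i j hij := by
    by_contra hne
    by_cases h : H.Adj i j
    · exact G.irrefl (hij ▸ hadj h)
    · exact Gᶜ.irrefl (hij ▸ hnadj ((H.compl_adj i j).2 ⟨hne, h⟩))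
  map_rel_iff' {i j} := by
    refine ⟨fun h => ?_, fun h => hadj h⟩
    by_contra hH
    have hne : i ≠ j := by rintro rfl; exact G.irrefl h
    exact ((G.compl_adj _ _).1 (hnadj ((H.compl_adj i j).2 ⟨hne, hH⟩))).2 h

def clawEmbedding {a b c d : V} (hab : G.Adj a b) (hac : G.Adj a c) (had : G.Adj a d)
    (hbc : Gᶜ.Adj b c) (hbd : Gᶜ.Adj b d) (hcd : Gᶜ.Adj c d) : claw ↪g G :=
  .ofAdj ![a, b, c, d]
    (by intro i j h; fin_cases i <;> fin_cases j <;> simp_all [claw, adj_comm])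
    (by intro i j h; fin_cases i <;> fin_cases j <;> simp_all [claw, adj_comm])

def bullEmbedding {a b c d e : V} (hab : G.Adj a b) (hbc : G.Adj b c) (hac : G.Adj a c)
    (had : G.Adj a d) (hbe : G.Adj b e) (hae : Gᶜ.Adj a e) (hbd : Gᶜ.Adj b d)
    (hcd : Gᶜ.Adj c d) (hce : Gᶜ.Adj c e) (hde : Gᶜ.Adj d e) : bull ↪g G :=
  .ofAdj ![a, b, c, d, e]
    (by intro i j h; fin_cases i <;> fin_cases j <;> simp_all [bull, adj_comm])
    (by intro i j h; fin_cases i <;> fin_cases j <;> simp_all [bull, adj_comm])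

def pathGraphFiveEmbedding {a b c d e : V} (hab : G.Adj a b) (hbc : G.Adj b c)
    (hcd : G.Adj c d) (hde : G.Adj d e) (hac : Gᶜ.Adj a c) (had : Gᶜ.Adj a d)
    (hae : Gᶜ.Adj a e) (hbd : Gᶜ.Adj b d) (hbe : Gᶜ.Adj b e) (hce : Gᶜ.Adj c e) :
    pathGraph 5 ↪g G :=
  .ofAdj ![a, b, c, d, e]
    (by intro i j h; fin_cases i <;> fin_cases j <;> simp_all [pathGraph_adj, adj_comm])
    (by intro i j h; fin_cases i <;> fin_cases j <;> simp_all [pathGraph_adj, adj_comm])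

theorem SimpleGraph.compl_adj_of_adj_of_compl_adj {u v w : V} (huv : G.Adj u v)
    (hvw : Gᶜ.Adj v w) (huw : ¬G.Adj u w) : Gᶜ.Adj u w := by
  refine (G.compl_adj u w).2 ⟨?_, huw⟩
  rintro rfl
  exact ((G.compl_adj v u).1 hvw).2 huv.symm

def SimpleGraph.BullClawP5Free (G : SimpleGraph V) : Prop :=
  IsEmpty (bull ↪g G) ∧ IsEmpty (claw ↪g G) ∧ IsEmpty (pathGraph 5 ↪g G)

theorem SimpleGraph.Reachable.exists_induced_path_three {x z : V} (h : G.Reachable x z)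
    (hxz : Gᶜ.Adj x z) : ∃ p q, G.Adj p x ∧ G.Adj p q ∧ Gᶜ.Adj x q := by
  obtain ⟨d, -, hd, hd'⟩ := h.some.exists_boundary_dart {w | ¬Gᶜ.Adj x w} (fun h => h.ne rfl)
    (not_not.2 hxz)
  refine ⟨d.fst, d.snd, ?_, d.adj, not_not.1 hd'⟩
  by_contra hp
  exact hd (compl_adj_of_adj_of_compl_adj d.adj (not_not.1 hd').symm hp).symm

namespace SimpleGraph.BullClawP5Free

variable {x y z a u v : V}

theorem anticomplete_of_adj_anticomplete (hG : G.BullClawP5Free) (hax : G.Adj a x)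
    (haz : G.Adj a z) (hxz : Gᶜ.Adj x z) (huv : G.Adj u v)
    (hv : Gᶜ.Adj v x ∧ Gᶜ.Adj v a ∧ Gᶜ.Adj v z) :
    Gᶜ.Adj u x ∧ Gᶜ.Adj u a ∧ Gᶜ.Adj u z := by
  obtain ⟨hvx, hva, hvz⟩ := hv
  obtain ⟨hbull, hclaw, hP5⟩ := hG
  by_cases hux : G.Adj u x <;> by_cases huz : G.Adj u z
  · exact (hclaw.false (clawEmbedding hux huz huv hxz hvx.symm hvz.symm)).elim
  · have huz' := compl_adj_of_adj_of_compl_adj huv hvz huz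
    by_cases hua : G.Adj u a
    · exact (hbull.false (bullEmbedding hua hax hux huv haz huz' hva.symm hvx.symm hxz hvz)).elim
    · exact (hP5.false (pathGraphFiveEmbedding huv.symm hux hax.symm haz hvx hva hvz
        (compl_adj_of_adj_of_compl_adj huv hva hua) huz' hxz)).elim
  · have hux' := compl_adj_of_adj_of_compl_adj huv hvx hux
    by_cases hua : G.Adj u a
    · exact (hbull.false (bullEmbedding hua haz huz huv hax hux' hva.symm hvz.symm hxz.symm
        hvx)).elim
    · exact (hP5.false (pathGraphFiveEmbedding huv.symm huz haz.symm hax hvz hva hvx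
        (compl_adj_of_adj_of_compl_adj huv hva hua) hux' hxz.symm)).elim
  · have hux' := compl_adj_of_adj_of_compl_adj huv hvx hux
    have huz' := compl_adj_of_adj_of_compl_adj huv hvz huz
    refine ⟨hux', compl_adj_of_adj_of_compl_adj huv hva fun hua => ?_, huz'⟩
    exact hclaw.false (clawEmbedding hax haz hua.symm hxz hux'.symm huz'.symm)

theorem not_anticomplete_of_reachable (hG : G.BullClawP5Free) (hax : G.Adj a x)
    (haz : G.Adj a z) (hxz : Gᶜ.Adj x z) (hxv : G.Reachable x v) :
    ¬(Gᶜ.Adj v x ∧ Gᶜ.Adj v a ∧ Gᶜ.Adj v z) := fun hv => by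
  obtain ⟨d, -, hd, hd'⟩ := hxv.some.exists_boundary_dart
    {w | ¬(Gᶜ.Adj w x ∧ Gᶜ.Adj w a ∧ Gᶜ.Adj w z)} (fun h => h.1.ne rfl) (not_not.2 hv)
  exact hd (hG.anticomplete_of_adj_anticomplete hax haz hxz d.adj (not_not.1 hd'))

theorem not_indep_triple_of_common_adj (hG : G.BullClawP5Free) (hxy : G.Reachable x y)
    (hax : G.Adj a x) (haz : G.Adj a z) : ¬(Gᶜ.Adj x y ∧ Gᶜ.Adj x z ∧ Gᶜ.Adj y z) := by
  rintro ⟨hxy', hxz', hyz'⟩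
  have hay : G.Adj a y := by
    by_contra hay
    exact hG.not_anticomplete_of_reachable hax haz hxz' hxy
      ⟨hxy'.symm, (compl_adj_of_adj_of_compl_adj hax hxy' hay).symm, hyz'⟩
  exact hG.2.1.false (clawEmbedding hax haz hay hxz' hxy' hyz'.symm)

theorem not_indep_triple (hG : G.BullClawP5Free) (hxy : G.Reachable x y)
    (hxz : G.Reachable x z) : ¬(Gᶜ.Adj x y ∧ Gᶜ.Adj x z ∧ Gᶜ.Adj y z) := by
  rintro ⟨hxy', hxz', hyz'⟩
  obtain ⟨p, q, hpx, hpq, hxq⟩ := hxz.exists_induced_path_three hxz'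
  have hzp : Gᶜ.Adj z p := (compl_adj_of_adj_of_compl_adj hpx hxz' fun hpz =>
    hG.not_indep_triple_of_common_adj hxy hpx hpz ⟨hxy', hxz', hyz'⟩).symm
  have hqz : G.Adj q z := by
    by_contra hqz
    exact hG.not_anticomplete_of_reachable hpx hpq hxq hxz
      ⟨hxz'.symm, hzp, (compl_adj_of_adj_of_compl_adj hpq.symm hzp.symm hqz).symm⟩
  have hyp : Gᶜ.Adj y p := (compl_adj_of_adj_of_compl_adj hpx hxy' fun hpy =>
    hG.not_indep_triple_of_common_adj hxz hpx hpy ⟨hxz', hxy', hyz'.symm⟩).symm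
  have hyq : Gᶜ.Adj y q := (compl_adj_of_adj_of_compl_adj hqz hyz'.symm fun hqy =>
    hG.not_indep_triple_of_common_adj hxz.symm hqz hqy ⟨hxz'.symm, hyz'.symm, hxy'⟩).symm
  exact hG.not_anticomplete_of_reachable hpx hpq hxq hxy ⟨hxy'.symm, hyp, hyq⟩

end SimpleGraph.BullClawP5Free

theorem bull_connected : bull.Connected := by
  refine (connected_iff_exists_forall_reachable _).2 ⟨0, fun w => ?_⟩
  have h01 : bull.Adj 0 1 := by simp [bull]
  fin_cases w
  · rfl
  · exact h01.reachable
  · exact Adj.reachable (by simp [bull])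
  · exact Adj.reachable (by simp [bull])
  · exact h01.reachable.trans (Adj.reachable (by simp [bull]))

theorem claw_connected : claw.Connected := by
  refine (connected_iff_exists_forall_reachable _).2 ⟨0, fun w => ?_⟩
  fin_cases w
  · rfl
  all_goals exact Adj.reachable (by simp [claw])

theorem isEmpty_embedding_of_indep_triple {H : SimpleGraph W}
    (hG : ∀ x y z, G.Reachable x y → G.Reachable x z → ¬(Gᶜ.Adj x y ∧ Gᶜ.Adj x z ∧ Gᶜ.Adj y z))
    (hH : H.Connected) {i j k : W} (h : Hᶜ.Adj i j ∧ Hᶜ.Adj i k ∧ Hᶜ.Adj j k) :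
    IsEmpty (H ↪g G) := by
  refine ⟨fun e => hG _ _ _ ((hH.preconnected i j).map e.toHom)
    ((hH.preconnected i k).map e.toHom) ?_⟩
  have he := fun {i j : W} => (Embedding.complEquiv e).map_adj_iff (v := i) (w := j)
  exact ⟨he.2 h.1, he.2 h.2.1, he.2 h.2.2⟩

theorem forall_isEmpty_threeP1_embedding_induce_supp_iff :
    (∀ c : G.ConnectedComponent, IsEmpty (threeP1 ↪g G.induce c.supp)) ↔
      ∀ x y z, G.Reachable x y → G.Reachable x z → ¬(Gᶜ.Adj x y ∧ Gᶜ.Adj x z ∧ Gᶜ.Adj y z) := by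
  constructor
  · rintro h x y z hxy hxz ⟨hxy', hxz', hyz'⟩
    have mem : ∀ {w}, G.Reachable x w → w ∈ (G.connectedComponentMk x).supp :=
      fun hw => ConnectedComponent.sound hw.symm
    refine (h _).false (.ofAdj ![⟨x, mem .rfl⟩, ⟨y, mem hxy⟩, ⟨z, mem hxz⟩] ?_ ?_)
    · simp [threeP1]
    · intro i j hij
      fin_cases i <;> fin_cases j <;> simp_all [threeP1, compl_adj, adj_comm, Ne.symm]
  · intro h c
    refine ⟨fun e => ?_⟩
    let f := (Embedding.induce c.supp).comp e
    have hf : ∀ i j, G.Reachable (f i) (f j) := fun i j =>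
      ConnectedComponent.exact ((e i).2.trans (e j).2.symm)
    have hf' : ∀ i j, i ≠ j → Gᶜ.Adj (f i) (f j) := fun i j hij =>
      (Embedding.complEquiv f).map_adj_iff.2 (by simpa [threeP1] using hij)
    exact h _ _ _ (hf 0 1) (hf 0 2)
      ⟨hf' 0 1 (by decide), hf' 0 2 (by decide), hf' 1 2 (by decide)⟩

end

/-- A graph is (bull, claw, `P_5`)-free if and only if every connected component is
`3P_1`-free. -/
theorem bull_claw_P5_free_iff (G : SimpleGraph V) :
    (IsEmpty (bull ↪g G) ∧ IsEmpty (claw ↪g G) ∧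
      IsEmpty (SimpleGraph.pathGraph 5 ↪g G)) ↔
    ∀ c : G.ConnectedComponent, IsEmpty (threeP1 ↪g G.induce c.supp) := by
  rw [forall_isEmpty_threeP1_embedding_induce_supp_iff]
  refine ⟨fun hG _ _ _ => BullClawP5Free.not_indep_triple hG, fun h => ⟨?_, ?_, ?_⟩⟩
  · exact isEmpty_embedding_of_indep_triple h bull_connected (i := 2) (j := 3) (k := 4)
      (by simp [bull])
  · exact isEmpty_embedding_of_indep_triple h claw_connected (i := 1) (j := 2) (k := 3)
      (by simp [claw])
  · exact isEmpty_embedding_of_indep_triple h (pathGraph_connected 4) (i := 0) (j := 2) (k := 4)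
      (by simp [pathGraph_adj])
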